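/- For every integer k ≥ 0, the inclusion I(P_{3k+2}) ↪ I(P_{3k+3}) of independence complexes of path graphs is a homotopy equivalence, where P_{3k+2} is the induced subgraph of P_{3k+3} obtained by deleting one endpoint. -/
import Mathlib


/-! ## Simplicial complexes, realizations, and homotopy-theoretic notions -/

/-- The independence complex of a simple graph, as an abstract simplicial complex:
the collection of finite independent sets of vertices. -/
def indepCx {V : Type} (G : SimpleGraph V) : Set (Finset V) :=
  {s | ∀ u ∈ s, ∀ v ∈ s, ¬ G.Adj u v}

/-- The matching complex of a simple graph: the collection of finite sets of edges,
no two of which share an endpoint. -/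
def matchCx {V : Type} (G : SimpleGraph V) : Set (Finset (Sym2 V)) :=
  {s | (↑s : Set (Sym2 V)) ⊆ G.edgeSet ∧
    ∀ e ∈ s, ∀ e' ∈ s, e ≠ e' → ∀ x : V, x ∈ e → x ∉ e'}

/-- The geometric realization of an abstract simplicial complex `K` on vertex set `V`:
the space of convex-combination weight functions supported on a simplex of `K`. -/
def geom {V : Type} (K : Set (Finset V)) : Type :=
  {f : V → ℝ // (∃ s ∈ K, ∀ v, f v ≠ 0 → v ∈ s) ∧ (∀ v, 0 ≤ f v) ∧ ∑ᶠ v, f v = 1}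

noncomputable instance geom.topInst {V : Type} (K : Set (Finset V)) :
    TopologicalSpace (geom K) :=
  instTopologicalSpaceSubtype

/-- A continuous map is a homotopy equivalence. -/
def IsHtpyEquiv {X Y : Type} [TopologicalSpace X] [TopologicalSpace Y] (f : C(X, Y)) : Prop :=
  ∃ g : C(Y, X), (g.comp f).Homotopic (ContinuousMap.id X) ∧
    (f.comp g).Homotopic (ContinuousMap.id Y)

/-- Any singleton vertex set is independent. -/
lemma singleton_mem_indepCx {V : Type} (G : SimpleGraph V) (v : V) :
    ({v} : Finset V) ∈ indepCx G := by
  intro u hu w hw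
  simp only [Finset.mem_singleton] at hu hw
  subst hu; subst hw
  exact G.irrefl

/-- The point of a geometric realization corresponding to a vertex. -/
noncomputable def geomPt {V : Type} [DecidableEq V] {K : Set (Finset V)} (v : V)
    (h : ({v} : Finset V) ∈ K) : geom K := by
  refine ⟨fun w => if w = v then 1 else 0, ⟨{v}, h, fun w hw => ?_⟩, fun w => ?_, ?_⟩
  · by_cases hwv : w = v
    · simp [hwv]
    · simp [hwv] at hw
  · by_cases hwv : w = v <;> simp [hwv]
  · rw [finsum_eq_single _ v (fun x hx => if_neg hx)]
    simp

/-- The `k`-dimensional sphere. -/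
def Sph (k : ℕ) : Type := Metric.sphere (0 : EuclideanSpace ℝ (Fin (k+1))) 1

noncomputable instance Sph.topInst (k : ℕ) : TopologicalSpace (Sph k) := by
  unfold Sph; infer_instance

/-- A pointed topological space. -/
structure Ptd where
  carrier : Type
  [topInst : TopologicalSpace carrier]
  pt : carrier

attribute [instance] Ptd.topInst

/-- The one-point pointed space. -/
def Ptd.point : Ptd := { carrier := PUnit, pt := PUnit.unit }

/-- The `k`-sphere as a pointed space. -/
noncomputable def Ptd.sphere (k : ℕ) : Ptd where
  carrier := Sph k
  pt := ⟨EuclideanSpace.single 0 1, by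
    simp [mem_sphere_iff_norm, EuclideanSpace.norm_single]⟩

/-- The wedge sum of two pointed spaces. -/
def Ptd.wedge (X Y : Ptd) : Ptd where
  carrier := Quot (fun p q : X.carrier ⊕ Y.carrier => p = q ∨
    (p = Sum.inl X.pt ∧ q = Sum.inr Y.pt) ∨ (p = Sum.inr Y.pt ∧ q = Sum.inl X.pt))
  pt := Quot.mk _ (Sum.inl X.pt)

/-- The reduced suspension of a pointed space: in `X × [0,1]`, collapse
`X × {0} ∪ X × {1} ∪ {pt} × [0,1]` to a point. -/
def Ptd.susp (X : Ptd) : Ptd where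
  carrier := Quot (fun p q : X.carrier × unitInterval => p = q ∨
    ((p.2 = 0 ∨ p.2 = 1 ∨ p.1 = X.pt) ∧ (q.2 = 0 ∨ q.2 = 1 ∨ q.1 = X.pt)))
  pt := Quot.mk _ (X.pt, 0)

/-- Iterated reduced suspension `Σ^k`. -/
def Ptd.suspIter (k : ℕ) (X : Ptd) : Ptd := Ptd.susp^[k] X

/-- The wedge of `k` copies of a pointed space (the empty wedge being a point). -/
def Ptd.wedgeIter : ℕ → Ptd → Ptd
  | 0, _ => Ptd.point
  | k+1, X => (Ptd.wedgeIter k X).wedge X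

/-- A finite wedge of spheres of prescribed dimensions (the empty wedge being a point). -/
noncomputable def wedgeOfSpheres : List ℕ → Ptd
  | [] => Ptd.point
  | d :: ds => (Ptd.sphere d).wedge (wedgeOfSpheres ds)

/-- A space is `k`-connected (`k : ℤ`): it is nonempty whenever `k ≥ -1`, and every
continuous map from a sphere of dimension `≤ k` into it is null-homotopic. -/
def IsConn (X : Type) [TopologicalSpace X] (k : ℤ) : Prop :=
  (-1 ≤ k → Nonempty X) ∧
    ∀ i : ℕ, (i : ℤ) ≤ k → ∀ f : C(Sph i, X), ∃ x : X,
      f.Homotopic (ContinuousMap.const _ x)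

/-! ## Inclusions of independence complexes of induced subgraphs -/

/-- Extension by zero of a function defined on a subset of `V`. -/
noncomputable def extendZero {V : Type} {S : Set V} (f : ↥S → ℝ) : V → ℝ :=
  Function.extend Subtype.val f 0

lemma extendZero_mem {V : Type} {S : Set V} (f : ↥S → ℝ) (x : ↥S) :
    extendZero f ↑x = f x :=
  Subtype.val_injective.extend_apply f 0 x

lemma extendZero_not_mem {V : Type} {S : Set V} (f : ↥S → ℝ) {v : V} (h : v ∉ S) :
    extendZero f v = 0 :=
  Function.extend_apply' f (0 : V → ℝ) v (fun ⟨x, hx⟩ => h (hx ▸ x.2))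

lemma finsum_extendZero {V : Type} {S : Set V} (f : ↥S → ℝ) :
    ∑ᶠ v, extendZero f v = ∑ᶠ x : ↥S, f x := by
  rw [show (fun x : ↥S => f x) = fun x : ↥S => extendZero f ↑x from
      funext fun x => (extendZero_mem f x).symm,
    finsum_set_coe_eq_finsum_mem, ← finsum_mem_univ (f := extendZero f),
    finsum_mem_inter_support_eq' _ Set.univ S]
  intro x hx
  simp only [Set.mem_univ, true_iff]
  exact by_contra fun h => hx (extendZero_not_mem f h)

/-- An independent set of an induced subgraph is independent in the ambient graph. -/
lemma indep_image {V : Type} [DecidableEq V] (G : SimpleGraph V) (S : Set V)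
    {s : Finset ↥S} (hs : s ∈ indepCx (G.induce S)) :
    s.image Subtype.val ∈ indepCx G := by
  intro u hu v hv
  simp only [Finset.mem_image] at hu hv
  obtain ⟨u', hu', rfl⟩ := hu
  obtain ⟨v', hv', rfl⟩ := hv
  exact hs u' hu' v' hv'

/-- The inclusion of the realization of the independence complex of an induced
subgraph into that of the ambient graph (extension of weight functions by zero). -/
noncomputable def inclMap {V : Type} [DecidableEq V] (G : SimpleGraph V) (S : Set V) :
    C(geom (indepCx (G.induce S)), geom (indepCx G)) where
  toFun f := ⟨extendZero f.1, by
      obtain ⟨s, hsK, hsupp⟩ := f.2.1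
      refine ⟨s.image Subtype.val, indep_image G S hsK, fun v hv => ?_⟩
      by_cases h : v ∈ S
      · rw [show v = ↑(⟨v, h⟩ : ↥S) from rfl, extendZero_mem] at hv
        exact Finset.mem_image.2 ⟨⟨v, h⟩, hsupp _ hv, rfl⟩
      · exact absurd (extendZero_not_mem f.1 h) hv,
    fun v => by
      by_cases h : v ∈ S
      · rw [show v = ↑(⟨v, h⟩ : ↥S) from rfl, extendZero_mem]; exact f.2.2.1 _
      · rw [extendZero_not_mem f.1 h],
    by rw [finsum_extendZero]; exact f.2.2.2⟩
  continuous_toFun := by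
    apply Continuous.subtype_mk
    apply continuous_pi
    intro v
    by_cases h : v ∈ S
    · have : (fun f : geom (indepCx (G.induce S)) => extendZero f.1 v) =
        fun f : geom (indepCx (G.induce S)) => f.1 ⟨v, h⟩ :=
        funext fun f => extendZero_mem f.1 ⟨v, h⟩
      rw [this]
      exact (continuous_apply _).comp continuous_subtype_val
    · have : (fun f : geom (indepCx (G.induce S)) => extendZero f.1 v) =
        fun _ => (0 : ℝ) := funext fun f => extendZero_not_mem f.1 h
      rw [this]
      exact continuous_const

/-! ## The graphs `G_{n,t}` and `H_{n,t}` (line graphs of polygonal line tilings) -/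

/-- Ambient vertex names for the graphs `G_{n,t}`: `a i`, `b i j`, `c i j`. -/
inductive GV : Type
  | a : ℕ → GV
  | b : ℕ → ℕ → GV
  | c : ℕ → ℕ → GV
deriving DecidableEq

/-- The base adjacency rules of `G_{n,t}` on the ambient vertex names (the parameter
`t` is handled by restricting to the appropriate vertex set). -/
def gRel (n : ℕ) : GV → GV → Prop
  | .a i, .b i' j => i' = i + 1 ∧ (j = 1 ∨ j = n - 1)
  | .a i, .c i' j => i' = i ∧ (j = 1 ∨ j = n - 1)
  | .b i j, .b i' j' => (i' = i ∧ j' = j + 1) ∨ (i' = i + 1 ∧ j = n - 1 ∧ j' = 1)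
  | .c i j, .c i' j' => (i' = i ∧ j' = j + 1) ∨ (i' = i + 1 ∧ j = n - 1 ∧ j' = 1)
  | _, _ => False

/-- The graph on all ambient vertex names with the adjacency rules of the `G_{n,t}`. -/
def gFull (n : ℕ) : SimpleGraph GV := SimpleGraph.fromRel (gRel n)

/-- The vertex set of `G_{n,t}`:
`{a_0, …, a_t} ∪ {b_{i,j}, c_{i,j} : 1 ≤ i ≤ t, 1 ≤ j ≤ n-1}`. -/
def GVset (n t : ℕ) : Set GV :=
  {v | match v with
    | .a i => i ≤ t
    | .b i j => 1 ≤ i ∧ i ≤ t ∧ 1 ≤ j ∧ j ≤ n - 1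
    | .c i j => 1 ≤ i ∧ i ≤ t ∧ 1 ≤ j ∧ j ≤ n - 1}

/-- The graph `G_{n,t}`, the line graph of the polygonal line tiling of `t` `2n`-gons. -/
def lineG (n t : ℕ) : SimpleGraph (GVset n t) := (gFull n).induce (GVset n t)

/-- The vertex set of `H_{n,t}`: that of `G_{n,t}` plus `b_{t+1,1}` and `c_{t+1,1}`. -/
def HVset (n t : ℕ) : Set GV := GVset n t ∪ {GV.b (t+1) 1, GV.c (t+1) 1}

/-- The graph `H_{n,t}`, the induced subgraph of `G_{n,t+1}` on
`V(G_{n,t}) ∪ {b_{t+1,1}, c_{t+1,1}}`. -/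
def lineH (n t : ℕ) : SimpleGraph (HVset n t) := (gFull n).induce (HVset n t)

lemma a0_mem_GVset (n t : ℕ) : GV.a 0 ∈ GVset n t := by simp [GVset]

lemma a0_mem_HVset (n t : ℕ) : GV.a 0 ∈ HVset n t := Or.inl (a0_mem_GVset n t)

/-- The realization of `I(G_{n,t})`, pointed at the vertex `a_0`. -/
noncomputable def IG (n t : ℕ) : Ptd where
  carrier := geom (indepCx (lineG n t))
  pt := geomPt ⟨GV.a 0, a0_mem_GVset n t⟩ (singleton_mem_indepCx _ _)

/-- The realization of `I(H_{n,t})`, pointed at the vertex `a_0`. -/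
noncomputable def IH (n t : ℕ) : Ptd where
  carrier := geom (indepCx (lineH n t))
  pt := geomPt ⟨GV.a 0, a0_mem_HVset n t⟩ (singleton_mem_indepCx _ _)

/-- The vertex set of `X_t = G_{n,t} ∖ a_{t-1}`. -/
def XVset (n t : ℕ) : Set GV := GVset n t \ {GV.a (t-1)}

/-- The graph `X_t = G_{n,t} ∖ a_{t-1}`. -/
def lineX (n t : ℕ) : SimpleGraph (XVset n t) := (gFull n).induce (XVset n t)

/-- The vertex set of `Y_t = X_t ∖ a_{t-2}`. -/
def YVset (n t : ℕ) : Set GV := XVset n t \ {GV.a (t-2)}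

/-- The graph `Y_t = X_t ∖ a_{t-2}`. -/
def lineY (n t : ℕ) : SimpleGraph (YVset n t) := (gFull n).induce (YVset n t)

lemma a0_mem_XVset {n t : ℕ} (ht : 2 ≤ t) : GV.a 0 ∈ XVset n t := by
  refine ⟨a0_mem_GVset n t, fun h => ?_⟩
  rw [Set.mem_singleton_iff] at h
  injection h with h'
  omega

lemma a0_mem_YVset {n t : ℕ} (ht : 3 ≤ t) : GV.a 0 ∈ YVset n t := by
  refine ⟨a0_mem_XVset (by omega), fun h => ?_⟩
  rw [Set.mem_singleton_iff] at h
  injection h with h'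
  omega

/-- The realization of `I(X_t)`, pointed at the vertex `a_0` (for `t ≥ 2`). -/
noncomputable def IX (n t : ℕ) (ht : 2 ≤ t) : Ptd where
  carrier := geom (indepCx (lineX n t))
  pt := geomPt ⟨GV.a 0, a0_mem_XVset ht⟩ (singleton_mem_indepCx _ _)

/-- The realization of `I(Y_t)`, pointed at the vertex `a_0` (for `t ≥ 3`). -/
noncomputable def IY (n t : ℕ) (ht : 3 ≤ t) : Ptd where
  carrier := geom (indepCx (lineY n t))
  pt := geomPt ⟨GV.a 0, a0_mem_YVset ht⟩ (singleton_mem_indepCx _ _)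

/-! ## The polygonal line tilings `P_{n,t}` themselves -/

/-- Ambient vertex names for the tiling `P_{n,t}`: `u i`/`v i` are the endpoints of the
`i`-th shared (vertical) edge, and `p i j` / `q i j` are the intermediate vertices of
the top/bottom boundary path of the `i`-th polygon. -/
inductive PV : Type
  | u : ℕ → PV
  | v : ℕ → PV
  | p : ℕ → ℕ → PV
  | q : ℕ → ℕ → PV
deriving DecidableEq

/-- The base adjacency rules of the tiling `P_{n,t}` on the ambient vertex names. -/
def pRel (n : ℕ) : PV → PV → Prop
  | .u i, .v i' => i' = i
  | .u i, .u i' => i' = i + 1 ∧ n = 2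
  | .v i, .v i' => i' = i + 1 ∧ n = 2
  | .u i, .p i' j => (i' = i + 1 ∧ j = 1) ∨ (i' = i ∧ j = n - 2)
  | .v i, .q i' j => (i' = i + 1 ∧ j = 1) ∨ (i' = i ∧ j = n - 2)
  | .p i j, .p i' j' => i' = i ∧ j' = j + 1
  | .q i j, .q i' j' => i' = i ∧ j' = j + 1
  | _, _ => False

/-- The graph on all ambient tiling vertex names. -/
def pFull (n : ℕ) : SimpleGraph PV := SimpleGraph.fromRel (pRel n)

/-- The vertex set of `P_{n,t}`. -/
def PVset (n t : ℕ) : Set PV :=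
  {w | match w with
    | .u i => i ≤ t
    | .v i => i ≤ t
    | .p i j => 1 ≤ i ∧ i ≤ t ∧ 1 ≤ j ∧ j ≤ n - 2
    | .q i j => 1 ≤ i ∧ i ≤ t ∧ 1 ≤ j ∧ j ≤ n - 2}

/-- The polygonal line tiling `P_{n,t}` of `t` `2n`-gons. -/
def polyP (n t : ℕ) : SimpleGraph (PVset n t) := (pFull n).induce (PVset n t)

/-! ## Auxiliary development for stmt_12 -/

namespace St12

open SimpleGraph

/-- Support of a point of a geometric realization is pairwise non-adjacent. -/
lemma indep_of_mem {V : Type} {G : SimpleGraph V} {f : V → ℝ}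
    (h : ∃ s ∈ indepCx G, ∀ v, f v ≠ 0 → v ∈ s) :
    ∀ u v, G.Adj u v → f u ≠ 0 → f v ≠ 0 → False := by
  obtain ⟨s, hs, hsupp⟩ := h
  exact fun u v hadj hu hv => hs u (hsupp u hu) v (hsupp v hv) hadj

/-- Build the simplex-membership datum from pairwise non-adjacency of the support. -/
lemma geom_prop1 {V : Type} [Fintype V] {G : SimpleGraph V} {f : V → ℝ}
    (h : ∀ u v, G.Adj u v → f u ≠ 0 → f v ≠ 0 → False) :
    ∃ s ∈ indepCx G, ∀ v, f v ≠ 0 → v ∈ s := by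
  classical
  refine ⟨Finset.univ.filter (fun v => f v ≠ 0), ?_, fun v hv => by simp [hv]⟩
  intro u hu v hv hadj
  simp only [Finset.mem_filter] at hu hv
  exact h u v hadj hu.2 hv.2

/-- The fold map at level `j`: the weight at vertex `3i+2` has been transferred to
vertex `3i` for all `i < j`. -/
noncomputable def Rfun (k j : ℕ) (f : Fin (3*k+3) → ℝ) (v : Fin (3*k+3)) : ℝ :=
  if (v.val % 3 = 2 ∧ v.val / 3 < j) then 0
  else if h : (v.val % 3 = 0 ∧ v.val / 3 < j) then
    f v + f ⟨v.val + 2, by have := v.isLt; omega⟩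
  else f v

/-- Superset of the supports of `Rfun k p f` through `Rfun k q f` (for `p ≤ q ≤ p+1`). -/
def Cset (k p q : ℕ) (f : Fin (3*k+3) → ℝ) (v : Fin (3*k+3)) : Prop :=
  (f v ≠ 0 ∧ ¬(v.val % 3 = 2 ∧ v.val / 3 < p)) ∨
  (v.val % 3 = 0 ∧ v.val / 3 < q ∧ ∃ h : v.val + 2 < 3*k+3, f ⟨v.val + 2, h⟩ ≠ 0)

lemma Cset_mono {k p p' q q' : ℕ} (hp : p ≤ p') (hq : q' ≤ q) {f : Fin (3*k+3) → ℝ}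
    {v : Fin (3*k+3)} (h : Cset k p' q' f v) : Cset k p q f v := by
  rcases h with ⟨h1, h2⟩ | ⟨h1, h2, h3⟩
  · exact Or.inl ⟨h1, fun hc => h2 ⟨hc.1, lt_of_lt_of_le hc.2 hp⟩⟩
  · exact Or.inr ⟨h1, lt_of_lt_of_le h2 hq, h3⟩

lemma supp_Rfun_subset {k j : ℕ} {f : Fin (3*k+3) → ℝ} (_hf : ∀ v, 0 ≤ f v)
    {v : Fin (3*k+3)} (h : Rfun k j f v ≠ 0) : Cset k j j f v := by
  unfold Rfun at h
  split_ifs at h with h1 h2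
  · exact absurd rfl h
  · by_cases hv2 : f ⟨v.val + 2, by have := v.isLt; omega⟩ ≠ 0
    · exact Or.inr ⟨h2.1, h2.2, _, hv2⟩
    · push_neg at hv2
      rw [hv2, add_zero] at h
      exact Or.inl ⟨h, by omega⟩
  · exact Or.inl ⟨h, h1⟩

/-- The key independence property of `Cset`. -/
lemma Cset_not_adj {k p q : ℕ} (hpq : q ≤ p + 1) {f : Fin (3*k+3) → ℝ}
    (hf : ∀ u v : Fin (3*k+3), (pathGraph (3*k+3)).Adj u v → f u ≠ 0 → f v ≠ 0 → False)
    {u v : Fin (3*k+3)} (hadj : (pathGraph (3*k+3)).Adj u v)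
    (hu : Cset k p q f u) (hv : Cset k p q f v) : False := by
  rw [pathGraph_adj] at hadj
  have key : ∀ a b : Fin (3*k+3), a.val + 1 = b.val →
      Cset k p q f a → Cset k p q f b → False := by
    intro a b hab ha hb
    rcases ha with ⟨hfa, hca⟩ | ⟨hm, hlt, h2, hfa2⟩ <;>
      rcases hb with ⟨hfb, hcb⟩ | ⟨hm', hlt', h2', hfb2⟩
    · exact hf a b (pathGraph_adj.mpr (Or.inl hab)) hfa hfb
    · -- a ≡ 2 mod 3, contradiction by arithmetic
      have h1 : a.val % 3 = 2 := by omega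
      have h3 : a.val / 3 ≥ p := by
        by_contra hc
        exact hca ⟨h1, by omega⟩
      omega
    · -- f(a+2) ≠ 0 and f(b) ≠ 0 with b+1 = a+2
      exact hf b ⟨a.val + 2, h2⟩ (pathGraph_adj.mpr (Or.inl (by simp; omega))) hfb hfa2
    · omega
  rcases hadj with h | h
  · exact key u v h hu hv
  · exact key v u h hv hu

lemma Rfun_zero (k : ℕ) (f : Fin (3*k+3) → ℝ) : Rfun k 0 f = f := by
  funext v; simp [Rfun]

lemma Rfun_nonneg {k j : ℕ} {f : Fin (3*k+3) → ℝ} (hf : ∀ v, 0 ≤ f v) (v : Fin (3*k+3)) :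
    0 ≤ Rfun k j f v := by
  unfold Rfun
  split_ifs
  · exact le_refl 0
  · exact add_nonneg (hf _) (hf _)
  · exact hf v

lemma Rfun_sum (k : ℕ) (f : Fin (3*k+3) → ℝ) (j : ℕ) :
    ∑ v, Rfun k j f v = ∑ v, f v := by
  induction j with
  | zero => rw [Rfun_zero]
  | succ j ih =>
    by_cases hj : j ≤ k
    · have hv0 : 3*j < 3*k+3 := by omega
      have hv2 : 3*j+2 < 3*k+3 := by omega
      have e0 : (⟨3*j, hv0⟩ : Fin (3*k+3)).val = 3*j := rfl
      have e2 : (⟨3*j+2, hv2⟩ : Fin (3*k+3)).val = 3*j+2 := rfl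
      have hne : (⟨3*j, hv0⟩ : Fin (3*k+3)) ≠ ⟨3*j+2, hv2⟩ := by
        simp only [ne_eq, Fin.mk.injEq]; omega
      have e1 : ∀ g : Fin (3*k+3) → ℝ,
          ∑ v, g v = ∑ v ∈ (Finset.univ.erase ⟨3*j+2, hv2⟩).erase ⟨3*j, hv0⟩, g v
            + g ⟨3*j, hv0⟩ + g ⟨3*j+2, hv2⟩ := by
        intro g
        rw [Finset.sum_erase_add _ _ (Finset.mem_erase.mpr ⟨hne, Finset.mem_univ _⟩)]
        rw [Finset.sum_erase_add _ _ (Finset.mem_univ _)]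
      have hcong : ∑ v ∈ (Finset.univ.erase ⟨3*j+2, hv2⟩).erase ⟨3*j, hv0⟩, Rfun k (j+1) f v =
          ∑ v ∈ (Finset.univ.erase ⟨3*j+2, hv2⟩).erase ⟨3*j, hv0⟩, Rfun k j f v := by
        refine Finset.sum_congr rfl (fun v hv => ?_)
        simp only [Finset.mem_erase, ne_eq, Fin.ext_iff, e0, e2] at hv
        have hc1 : (v.val % 3 = 2 ∧ v.val / 3 < j+1) ↔ (v.val % 3 = 2 ∧ v.val / 3 < j) := by
          omega
        have hc2 : (v.val % 3 = 0 ∧ v.val / 3 < j+1) ↔ (v.val % 3 = 0 ∧ v.val / 3 < j) := by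
          omega
        unfold Rfun
        simp only [hc1, hc2]
      have hval0 : Rfun k (j+1) f ⟨3*j, hv0⟩ = f ⟨3*j, hv0⟩ + f ⟨3*j+2, hv2⟩ := by
        unfold Rfun
        rw [if_neg (by omega), dif_pos (by omega)]
      have hval2 : Rfun k (j+1) f ⟨3*j+2, hv2⟩ = 0 := by
        unfold Rfun
        rw [if_pos (by omega)]
      have hval0' : Rfun k j f ⟨3*j, hv0⟩ = f ⟨3*j, hv0⟩ := by
        unfold Rfun
        rw [if_neg (by omega), dif_neg (by omega)]
      have hval2' : Rfun k j f ⟨3*j+2, hv2⟩ = f ⟨3*j+2, hv2⟩ := by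
        unfold Rfun
        rw [if_neg (by omega), dif_neg (by omega)]
      rw [e1 (Rfun k (j+1) f), hcong, hval0, hval2]
      rw [e1 (Rfun k j f), hval0', hval2'] at ih
      linarith
    · have heq : Rfun k (j+1) f = Rfun k j f := by
        funext v
        have hlt := v.isLt
        have hc1 : (v.val % 3 = 2 ∧ v.val / 3 < j+1) ↔ (v.val % 3 = 2 ∧ v.val / 3 < j) := by
          omega
        have hc2 : (v.val % 3 = 0 ∧ v.val / 3 < j+1) ↔ (v.val % 3 = 0 ∧ v.val / 3 < j) := by
          omega
        unfold Rfun
        simp only [hc1, hc2]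
      rw [heq, ih]

lemma Rfun_final {k : ℕ} (f : Fin (3*k+3) → ℝ) {v : Fin (3*k+3)}
    (hv : ¬ v.val < 3*k+2) : Rfun k (k+1) f v = 0 := by
  have hlt := v.isLt
  unfold Rfun
  rw [if_pos (by omega)]

lemma Rfun_last {k : ℕ} {f : Fin (3*k+3) → ℝ} (hlast : f ⟨3*k+2, by omega⟩ = 0)
    (j : ℕ) {v : Fin (3*k+3)} (hv : ¬ v.val < 3*k+2) : Rfun k j f v = 0 := by
  have hlt := v.isLt
  have hval : v.val = 3*k+2 := by omega
  unfold Rfun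
  split_ifs with h1 h2
  · rfl
  · omega
  · rw [show v = ⟨3*k+2, by omega⟩ from Fin.ext hval]
    exact hlast

lemma extendZero_restrict {V : Type} {S : Set V} (F : V → ℝ)
    (h0 : ∀ v ∉ S, F v = 0) : extendZero (fun x : ↥S => F x.val) = F := by
  funext v
  by_cases hv : v ∈ S
  · exact extendZero_mem (fun x : ↥S => F x.val) ⟨v, hv⟩
  · rw [extendZero_not_mem _ hv, h0 v hv]

lemma finsum_restrict {V : Type} {S : Set V} (F : V → ℝ)
    (h0 : ∀ v ∉ S, F v = 0) : ∑ᶠ x : ↥S, F x.val = ∑ᶠ v, F v := by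
  rw [← extendZero_restrict F h0, finsum_extendZero]
  simp only [extendZero_restrict F h0]

/-- Straight-line homotopy between two self-maps of a realized independence complex,
given that the union of the supports of the two images is always independent. -/
lemma homotopic_of_indep {V : Type} [Fintype V] {G : SimpleGraph V}
    (F G' : C(geom (indepCx G), geom (indepCx G)))
    (h : ∀ x u v, G.Adj u v → ((F x).1 u ≠ 0 ∨ (G' x).1 u ≠ 0) →
      ((F x).1 v ≠ 0 ∨ (G' x).1 v ≠ 0) → False) :
    F.Homotopic G' := by
  have sumF : ∀ x : geom (indepCx G), ∑ v, (F x).1 v = 1 := fun x => by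
    rw [← finsum_eq_sum_of_fintype]; exact (F x).2.2.2
  have sumG : ∀ x : geom (indepCx G), ∑ v, (G' x).1 v = 1 := fun x => by
    rw [← finsum_eq_sum_of_fintype]; exact (G' x).2.2.2
  have split : ∀ (x : geom (indepCx G)) (t : unitInterval) (v : V),
      (1 - t.1) * (F x).1 v + t.1 * (G' x).1 v ≠ 0 →
      ((F x).1 v ≠ 0 ∨ (G' x).1 v ≠ 0) := by
    intro x t v hne
    by_contra hc
    push_neg at hc
    rw [hc.1, hc.2, mul_zero, mul_zero, add_zero] at hne
    exact hne rfl
  refine ⟨⟨⟨fun p => ⟨fun v => (1 - p.1.1) * (F p.2).1 v + p.1.1 * (G' p.2).1 v,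
    ?_, ?_, ?_⟩, ?_⟩, ?_, ?_⟩⟩
  · exact geom_prop1 (fun u v hadj hu hv =>
      h p.2 u v hadj (split p.2 p.1 u hu) (split p.2 p.1 v hv))
  · intro v
    have h1 : (0:ℝ) ≤ 1 - p.1.1 := by have := p.1.2.2; simp at this ⊢; linarith
    exact add_nonneg (mul_nonneg h1 ((F p.2).2.2.1 v))
      (mul_nonneg p.1.2.1 ((G' p.2).2.2.1 v))
  · rw [finsum_eq_sum_of_fintype, Finset.sum_add_distrib, ← Finset.mul_sum,
      ← Finset.mul_sum, sumF, sumG]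
    ring
  · apply Continuous.subtype_mk
    apply continuous_pi
    intro v
    have c1 : Continuous fun p : unitInterval × geom (indepCx G) => (p.1 : ℝ) :=
      continuous_subtype_val.comp continuous_fst
    have cF : Continuous fun p : unitInterval × geom (indepCx G) => (F p.2).1 v :=
      (continuous_apply v).comp (continuous_subtype_val.comp
        (F.continuous.comp continuous_snd))
    have cG : Continuous fun p : unitInterval × geom (indepCx G) => (G' p.2).1 v :=
      (continuous_apply v).comp (continuous_subtype_val.comp
        (G'.continuous.comp continuous_snd))
    exact ((continuous_const.sub c1).mul cF).add (c1.mul cG)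
  · intro x
    apply Subtype.ext
    funext v
    simp
  · intro x
    apply Subtype.ext
    funext v
    simp

/-- The fold maps as continuous self-maps of `|I(P_{3k+3})|`. -/
noncomputable def RX (k j : ℕ) :
    C(geom (indepCx (SimpleGraph.pathGraph (3*k+3))),
      geom (indepCx (SimpleGraph.pathGraph (3*k+3)))) where
  toFun x := ⟨Rfun k j x.1,
    geom_prop1 (fun u v hadj hu hv =>
      Cset_not_adj (Nat.le_succ j) (indep_of_mem x.2.1) hadj
        (supp_Rfun_subset x.2.2.1 hu) (supp_Rfun_subset x.2.2.1 hv)),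
    fun v => Rfun_nonneg x.2.2.1 v,
    by rw [finsum_eq_sum_of_fintype, Rfun_sum, ← finsum_eq_sum_of_fintype]
       exact x.2.2.2⟩
  continuous_toFun := by
    apply Continuous.subtype_mk
    apply continuous_pi
    intro v
    by_cases h1 : (v.val % 3 = 2 ∧ v.val / 3 < j)
    · simp only [Rfun, if_pos h1]
      exact continuous_const
    · by_cases h2 : (v.val % 3 = 0 ∧ v.val / 3 < j)
      · simp only [Rfun, if_neg h1, dif_pos h2]
        exact ((continuous_apply v).comp continuous_subtype_val).add
          ((continuous_apply _).comp continuous_subtype_val)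
      · simp only [Rfun, if_neg h1, dif_neg h2]
        exact (continuous_apply v).comp continuous_subtype_val

lemma RX_zero (k : ℕ) : RX k 0 = ContinuousMap.id _ := by
  ext x : 1
  exact Subtype.ext (Rfun_zero k x.1)

lemma RX_step (k j : ℕ) : (RX k j).Homotopic (RX k (j+1)) := by
  apply homotopic_of_indep
  intro x u v hadj hu hv
  have hC : ∀ w : Fin (3*k+3), ((RX k j x).1 w ≠ 0 ∨ (RX k (j+1) x).1 w ≠ 0) →
      Cset k j (j+1) x.1 w := by
    intro w hw
    rcases hw with hw | hw
    · exact Cset_mono (le_refl j) (Nat.le_succ j) (supp_Rfun_subset x.2.2.1 hw)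
    · exact Cset_mono (Nat.le_succ j) (le_refl (j+1)) (supp_Rfun_subset x.2.2.1 hw)
  exact Cset_not_adj (le_refl (j+1)) (indep_of_mem x.2.1) hadj (hC u hu) (hC v hv)

lemma RX_homotopic_id (k j : ℕ) :
    (ContinuousMap.id _).Homotopic (RX k j) := by
  induction j with
  | zero => rw [RX_zero k]
  | succ j ih => exact ih.trans (RX_step k j)

/-- The candidate homotopy inverse: apply all folds, then restrict to the subgraph. -/
noncomputable def gmap (k : ℕ) :
    C(geom (indepCx (SimpleGraph.pathGraph (3*k+3))),
      geom (indepCx ((SimpleGraph.pathGraph (3*k+3)).induce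
        {v : Fin (3*k+3) | v.val < 3*k+2}))) where
  toFun x := ⟨fun v => Rfun k (k+1) x.1 v.val,
    geom_prop1 (fun u v hadj hu hv => by
      have hadj' : (SimpleGraph.pathGraph (3*k+3)).Adj u.val v.val :=
        SimpleGraph.comap_adj.mp hadj
      exact Cset_not_adj (Nat.le_succ (k+1)) (indep_of_mem x.2.1) hadj'
        (supp_Rfun_subset x.2.2.1 hu) (supp_Rfun_subset x.2.2.1 hv)),
    fun v => Rfun_nonneg x.2.2.1 v.val,
    (finsum_restrict (Rfun k (k+1) x.1) (fun v hv => Rfun_final x.1 hv)).trans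
      (by rw [finsum_eq_sum_of_fintype, Rfun_sum, ← finsum_eq_sum_of_fintype]
          exact x.2.2.2)⟩
  continuous_toFun := by
    apply Continuous.subtype_mk
    apply continuous_pi
    intro v
    by_cases h1 : ((v : Fin (3*k+3)).val % 3 = 2 ∧ (v : Fin (3*k+3)).val / 3 < k+1)
    · simp only [Rfun, if_pos h1]
      exact continuous_const
    · by_cases h2 : ((v : Fin (3*k+3)).val % 3 = 0 ∧ (v : Fin (3*k+3)).val / 3 < k+1)
      · simp only [Rfun, if_neg h1, dif_pos h2]
        exact ((continuous_apply _).comp continuous_subtype_val).add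
          ((continuous_apply _).comp continuous_subtype_val)
      · simp only [Rfun, if_neg h1, dif_neg h2]
        exact (continuous_apply _).comp continuous_subtype_val

/-- The fold maps as continuous self-maps of `|I(P_{3k+2})|`. -/
noncomputable def RY (k j : ℕ) :
    C(geom (indepCx ((SimpleGraph.pathGraph (3*k+3)).induce
        {v : Fin (3*k+3) | v.val < 3*k+2})),
      geom (indepCx ((SimpleGraph.pathGraph (3*k+3)).induce
        {v : Fin (3*k+3) | v.val < 3*k+2}))) where
  toFun y := ⟨fun v => Rfun k j (extendZero y.1) v.val,
    (by
      set x := inclMap (SimpleGraph.pathGraph (3*k+3))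
        {v : Fin (3*k+3) | v.val < 3*k+2} y with hx
      exact geom_prop1 (fun u v hadj hu hv => by
        have hadj' : (SimpleGraph.pathGraph (3*k+3)).Adj u.val v.val :=
          SimpleGraph.comap_adj.mp hadj
        exact Cset_not_adj (Nat.le_succ j) (indep_of_mem x.2.1) hadj'
          (supp_Rfun_subset x.2.2.1 hu) (supp_Rfun_subset x.2.2.1 hv))),
    fun v => Rfun_nonneg (inclMap (SimpleGraph.pathGraph (3*k+3))
        {v : Fin (3*k+3) | v.val < 3*k+2} y).2.2.1 v.val,
    (by
      have hlast : extendZero y.1 ⟨3*k+2, by omega⟩ = 0 :=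
        extendZero_not_mem y.1 (by simp)
      refine (finsum_restrict (Rfun k j (extendZero y.1))
        (fun v hv => Rfun_last hlast j hv)).trans ?_
      rw [finsum_eq_sum_of_fintype, Rfun_sum, ← finsum_eq_sum_of_fintype]
      exact (inclMap (SimpleGraph.pathGraph (3*k+3))
        {v : Fin (3*k+3) | v.val < 3*k+2} y).2.2.2)⟩
  continuous_toFun := by
    have hc : ∀ w : Fin (3*k+3), Continuous fun y :
        geom (indepCx ((SimpleGraph.pathGraph (3*k+3)).induce
          {v : Fin (3*k+3) | v.val < 3*k+2})) => extendZero y.1 w := by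
      intro w
      exact (continuous_apply w).comp (continuous_subtype_val.comp
        (inclMap (SimpleGraph.pathGraph (3*k+3))
          {v : Fin (3*k+3) | v.val < 3*k+2}).continuous)
    apply Continuous.subtype_mk
    apply continuous_pi
    intro v
    by_cases h1 : ((v : Fin (3*k+3)).val % 3 = 2 ∧ (v : Fin (3*k+3)).val / 3 < j)
    · simp only [Rfun, if_pos h1]
      exact continuous_const
    · by_cases h2 : ((v : Fin (3*k+3)).val % 3 = 0 ∧ (v : Fin (3*k+3)).val / 3 < j)
      · simp only [Rfun, if_neg h1, dif_pos h2]
        exact (hc _).add (hc _)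
      · simp only [Rfun, if_neg h1, dif_neg h2]
        exact hc _

lemma RY_zero (k : ℕ) : RY k 0 = ContinuousMap.id _ := by
  ext y : 1
  apply Subtype.ext
  funext v
  show Rfun k 0 (extendZero y.1) v.val = y.1 v
  rw [Rfun_zero]
  exact extendZero_mem y.1 v

lemma RY_step (k j : ℕ) : (RY k j).Homotopic (RY k (j+1)) := by
  apply homotopic_of_indep
  intro y u v hadj hu hv
  set x := inclMap (SimpleGraph.pathGraph (3*k+3))
    {v : Fin (3*k+3) | v.val < 3*k+2} y with hx
  have hadj' : (SimpleGraph.pathGraph (3*k+3)).Adj u.val v.val :=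
    SimpleGraph.comap_adj.mp hadj
  have hC : ∀ w : ↥{v : Fin (3*k+3) | v.val < 3*k+2},
      ((RY k j y).1 w ≠ 0 ∨ (RY k (j+1) y).1 w ≠ 0) →
      Cset k j (j+1) (extendZero y.1) w.val := by
    intro w hw
    rcases hw with hw | hw
    · exact Cset_mono (le_refl j) (Nat.le_succ j) (supp_Rfun_subset x.2.2.1 hw)
    · exact Cset_mono (Nat.le_succ j) (le_refl (j+1)) (supp_Rfun_subset x.2.2.1 hw)
  exact Cset_not_adj (le_refl (j+1)) (indep_of_mem x.2.1) hadj' (hC u hu) (hC v hv)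

lemma RY_homotopic_id (k j : ℕ) :
    (ContinuousMap.id _).Homotopic (RY k j) := by
  induction j with
  | zero => rw [RY_zero k]
  | succ j ih => exact ih.trans (RY_step k j)

lemma comp1 (k : ℕ) :
    (inclMap (SimpleGraph.pathGraph (3*k+3))
      {v : Fin (3*k+3) | v.val < 3*k+2}).comp (gmap k) = RX k (k+1) := by
  ext x : 1
  apply Subtype.ext
  exact extendZero_restrict _ (fun v hv => Rfun_final x.1 hv)

lemma comp2 (k : ℕ) :
    (gmap k).comp (inclMap (SimpleGraph.pathGraph (3*k+3))
      {v : Fin (3*k+3) | v.val < 3*k+2}) = RY k (k+1) := by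
  ext y : 1
  apply Subtype.ext
  rfl

end St12

/-- For every `k ≥ 0`, the inclusion `I(P_{3k+2}) ↪ I(P_{3k+3})` is a
homotopy equivalence, where `P_{3k+2}` is realized as the induced subgraph of the path
graph `P_{3k+3}` obtained by deleting the last endpoint. -/
theorem stmt_12 (k : ℕ) :
    IsHtpyEquiv (inclMap (SimpleGraph.pathGraph (3*k+3))
      {v : Fin (3*k+3) | v.val < 3*k+2}) := by
  refine ⟨St12.gmap k, ?_, ?_⟩
  · rw [St12.comp2]
    exact (St12.RY_homotopic_id k (k+1)).symm
  · rw [St12.comp1]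
    exact (St12.RX_homotopic_id k (k+1)).symm
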